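/- arXiv:1507.03369 — 4 statements merged into one kernel-verified Lean document; each statement's English description precedes it below -/
import Mathlib

section
/- Let G be a group acting on a compact metrizable space X by homeomorphisms, let x ∈ X, and let y be in the closure of the orbit of x. If h ∈ G satisfies h·y = y and h ≠ 1, and there is a continuous function witnessing that for all g ∈ G, h·(g·x) ≠ g·x in a uniform way, then a contradiction arises. Concretely: if x ∈ {0,1}^G has the distinct neighborhood property (for every h ≠ 1 there is a finite T ⊆ G with x restricted to ghT ≠ x restricted to gT for all g ∈ G), then every configuration y in the closure of the shift-orbit of x has trivial stabilizer. -/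
/-- The shift action of a group `G` on configurations `G → Bool`. -/
def shift {G : Type*} [Group G] (g : G) (x : G → Bool) : G → Bool :=
  fun h => x (g⁻¹ * h)

theorem stmt_3 {G : Type*} [Group G] [Countable G] (x : G → Bool)
    (hx : ∀ h : G, h ≠ 1 → ∃ T : Finset G, ∀ g : G,
      ∃ t ∈ T, x (g * h * t) ≠ x (g * t))
    (y : G → Bool) (hy : y ∈ closure {z : G → Bool | ∃ g : G, z = shift g x})
    (h : G) (hh : shift h y = y) : h = 1 := by
  by_contra hne
  obtain ⟨T, hT⟩ := hx h⁻¹ (by simpa using hne)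
  set F : Set G := (T : Set G) ∪ (fun t => h⁻¹ * t) '' (T : Set G) with hF
  have hFfin : F.Finite := (T.finite_toSet).union (T.finite_toSet.image _)
  have hU : IsOpen (F.pi fun f => ({y f} : Set Bool)) :=
    isOpen_set_pi hFfin fun a _ => isOpen_discrete _
  have hyU : y ∈ F.pi fun f => ({y f} : Set Bool) := fun f _ => rfl
  obtain ⟨z, hz1, g, rfl⟩ :=
    (mem_closure_iff.mp hy) _ hU hyU
  obtain ⟨t, ht, hne'⟩ := hT g⁻¹
  apply hne'
  have h1 : shift g x t = y t := hz1 t (Or.inl ht)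
  have h2 : shift g x (h⁻¹ * t) = y (h⁻¹ * t) :=
    hz1 _ (Or.inr ⟨t, ht, rfl⟩)
  have h3 : y (h⁻¹ * t) = y t := congrFun hh t
  simp only [shift] at h1 h2
  calc x (g⁻¹ * h⁻¹ * t) = x (g⁻¹ * (h⁻¹ * t)) := by rw [mul_assoc]
    _ = y t := by rw [h2, h3]
    _ = x (g⁻¹ * t) := h1.symm
end

section
/- Let G be a group with finite generating set S, closed under inverses, and let w = w₁⋯wₙ be a word over S of minimal length among all words representing elements of the form u⁻¹gu (u ranging over all words) for a fixed group element g ≠ 1. Then the walk 1, w₁, w₁w₂, …, w₁⋯wₙ, w·w₁, …, w·w₁⋯w_{n-1} in the Cayley graph of (G,S) has no repeated vertices, i.e., it is a path of length 2n−1. -/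
theorem stmt_6 {G : Type*} [Group G] (S : Finset G)
    (hSsym : ∀ s ∈ S, s⁻¹ ∈ S) (hSgen : Subgroup.closure (S : Set G) = ⊤)
    (g : G) (hg : g ≠ 1) (w : List G) (hw : ∀ a ∈ w, a ∈ S)
    (n : ℕ) (hn : w.length = n) (hn1 : 1 ≤ n)
    (hrep : ∃ u : G, g = u * w.prod * u⁻¹)
    (hmin : ∀ (u : G) (w' : List G), (∀ a ∈ w', a ∈ S) →
      g = u * w'.prod * u⁻¹ → n ≤ w'.length)
    (v : ℕ → G)
    (hv : ∀ i, v i = if i ≤ n then (w.take i).prod else w.prod * (w.take (i - n)).prod) :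
    ∀ i < 2 * n, ∀ j < 2 * n, v i = v j → i = j := by
  obtain ⟨u, hu⟩ := hrep
  have hsplit : ∀ a b : ℕ, a ≤ b →
      (w.take b).prod = (w.take a).prod * ((w.drop a).take (b - a)).prod := by
    intro a b hab
    have h : w.take b = w.take a ++ (w.drop a).take (b - a) := by
      rw [← List.take_add]
      congr 1
      omega
    rw [h, List.prod_append]
  have case1 : ∀ a b : ℕ, a < b → b ≤ n →
      (w.take a).prod = (w.take b).prod → False := by
    intro a b hab hbn heq
    have hprod : (w.take a ++ w.drop b).prod = w.prod := by
      rw [List.prod_append, heq]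
      conv_rhs => rw [← List.take_append_drop b w]
      rw [List.prod_append]
    have hlen := hmin u (w.take a ++ w.drop b)
      (by
        intro x hx
        rcases List.mem_append.1 hx with h | h
        · exact hw x (List.mem_of_mem_take h)
        · exact hw x (List.mem_of_mem_drop h))
      (by rw [hprod]; exact hu)
    have h1 : (w.take a ++ w.drop b).length = a + (n - b) := by
      simp [List.length_take, List.length_drop, hn]
      omega
    omega
  have case3 : ∀ i k : ℕ, i ≤ n → 1 ≤ k → k < n →
      (w.take i).prod = w.prod * (w.take k).prod → False := by
    intro i k hin hk1 hkn heq
    rcases lt_trichotomy k i with h | h | h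
    · -- k < i : shorter word (w.drop k).take (i - k)
      have hpi := hsplit k i (le_of_lt h)
      have hwprod : w.prod = (w.take i).prod * ((w.take k).prod)⁻¹ := by
        rw [heq]; group
      have hconj : g = (u * (w.take i).prod) * ((w.drop k).take (i - k)).prod *
          (u * (w.take i).prod)⁻¹ := by
        have hprod : ((w.drop k).take (i - k)).prod
            = ((w.take k).prod)⁻¹ * (w.take i).prod := by
          rw [hpi]; group
        rw [hprod, hu, hwprod]; group
      have hlen := hmin (u * (w.take i).prod) ((w.drop k).take (i - k))
        (fun x hx => hw x (List.mem_of_mem_drop (List.mem_of_mem_take hx))) hconj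
      have h1 : ((w.drop k).take (i - k)).length ≤ i - k := by
        simp [List.length_take]
      omega
    · -- k = i : w.prod = 1
      subst h
      have h1 : w.prod = 1 := by
        have := heq
        nth_rewrite 1 [show (w.take k).prod = 1 * (w.take k).prod by group] at this
        exact (mul_right_cancel this).symm
      have := hmin u [] (by simp) (by simpa [h1] using hu)
      simp at this
      omega
    · -- i < k : shorter word, inverses of (w.drop i).take (k - i) reversed
      have hpk := hsplit i k (le_of_lt h)
      set m := (w.drop i).take (k - i) with hm
      have hwprod : w.prod = (w.take i).prod * ((w.take k).prod)⁻¹ := by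
        rw [heq]; group
      have hprod : ((m.reverse).map (·⁻¹)).prod = m.prod⁻¹ := by
        rw [List.map_reverse, ← List.prod_inv_reverse]
      have hmprod : m.prod = ((w.take i).prod)⁻¹ * (w.take k).prod := by
        rw [hpk]; group
      have hconj : g = (u * (w.take i).prod) * ((m.reverse).map (·⁻¹)).prod *
          (u * (w.take i).prod)⁻¹ := by
        rw [hprod, hmprod, hu, hwprod]; group
      have hlen := hmin (u * (w.take i).prod) ((m.reverse).map (·⁻¹))
        (by
          intro x hx
          rcases List.mem_map.1 hx with ⟨y, hy, rfl⟩
          exact hSsym y (hw y (List.mem_of_mem_drop (List.mem_of_mem_take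
            (List.mem_reverse.1 hy))))) hconj
      have h1 : ((m.reverse).map (·⁻¹)).length ≤ k - i := by
        simp [hm, List.length_take]
      omega
  have key : ∀ i j : ℕ, i < j → j < 2 * n → v i = v j → False := by
    intro i j hij hj heq
    rw [hv i, hv j] at heq
    by_cases hi' : i ≤ n
    · by_cases hj' : j ≤ n
      · rw [if_pos hi', if_pos hj'] at heq
        exact case1 i j hij hj' heq
      · rw [if_pos hi', if_neg hj'] at heq
        exact case3 i (j - n) hi' (by omega) (by omega) heq
    · have hj' : ¬ j ≤ n := by omega
      rw [if_neg hi', if_neg hj'] at heq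
      exact case1 (i - n) (j - n) (by omega) (by omega) (mul_left_cancel heq)
  intro i hi j hj heq
  rcases lt_trichotomy i j with h | h | h
  · exact absurd heq (fun e => key i j h hj e)
  · exact h
  · exact absurd heq.symm (fun e => key j i h hi e)
end

section
/- Let X ⊆ A^G be a subshift over a countable group G such that for every x ∈ X and every Følner sequence (F_n) of G, the density of 1's dens(1, F_n, x) converges to a fixed irrational α ∈ [0,1] \ ℚ, where A = {0,1}. Suppose additionally G is amenable and infinite. Then no configuration x ∈ X has finite orbit under the shift action; that is, X is weakly aperiodic. -/
open Filter

/-- A (right) Følner sequence of nonempty finite subsets of `G`. -/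
def IsFolner {G : Type*} [Group G] [DecidableEq G] (F : ℕ → Finset G) : Prop :=
  (∀ n, (F n).Nonempty) ∧
  ∀ g : G, Tendsto
    (fun n => (((symmDiff ((F n).image (· * g)) (F n))).card : ℝ) / ((F n).card : ℝ))
    atTop (nhds 0)

/-- Density of `1`'s of the configuration `x` on the finite set `F`. -/
noncomputable def dens {G : Type*} (F : Finset G) (x : G → Bool) : ℝ :=
  ((F.filter (fun g => x g = true)).card : ℝ) / (F.card : ℝ)

/-!
If `x` has a finite orbit `O`, the fibres `{g | g⁻¹ • x = y}`, `y ∈ O`, partition `G` and are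
permuted transitively by right translations (they are the right cosets of the stabiliser). Along a
right Følner sequence a right translation changes densities by `o(1)`, so every fibre has density
tending to `1 / |O|`. Since `x g = (g⁻¹ • x) 1`, the density of `1`'s in `x` then tends to the
rational number `#{y ∈ O | y 1 = true} / |O|`, which cannot be the irrational `α`.
-/

open scoped symmDiff
open Topology MulAction
open Finset hiding dens

lemma Finset.abs_card_filter_sub_card_filter_le {β : Type*} [DecidableEq β] (p : β → Prop)
    [DecidablePred p] (s t : Finset β) :
    |(#(s.filter p) : ℝ) - #(t.filter p)| ≤ #(s ∆ t) := by
  have key : ∀ s t : Finset β, (#(s.filter p) : ℝ) ≤ #(t.filter p) + #(s ∆ t) := by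
    intro s t
    norm_cast
    calc #(s.filter p) ≤ #(t.filter p ∪ s ∆ t) := card_le_card fun a => by
            simp only [mem_filter, mem_union, mem_symmDiff]; tauto
      _ ≤ _ := card_union_le _ _
  have h := key t s
  rw [symmDiff_comm] at h
  exact abs_sub_le_iff.2 ⟨by linarith [key s t], by linarith⟩

lemma tendsto_one_div_card_of_sum_eq_one {ι β : Type*} {l : Filter β} {s : Finset ι}
    {a : ι → β → ℝ} (hsum : ∀ b, ∑ j ∈ s, a j b = 1)
    {i : ι} (hi : i ∈ s) (hdiff : ∀ j ∈ s, Tendsto (fun b => a j b - a i b) l (𝓝 0)) :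
    Tendsto (a i) l (𝓝 (1 / #s)) := by
  have hs : (#s : ℝ) ≠ 0 := by exact_mod_cast (card_pos.2 ⟨i, hi⟩).ne'
  have hrepr : a i = fun b => (1 - ∑ j ∈ s, (a j b - a i b)) / #s := by
    funext b
    rw [sum_sub_distrib, hsum, sum_const, nsmul_eq_mul]
    field_simp
    ring
  have hlim :=
    ((tendsto_const_nhds (x := (1 : ℝ))).sub (tendsto_finsetSum s hdiff)).div_const (#s : ℝ)
  rw [hrepr]
  simpa using hlim

lemma dens_eq_sum_dens_fiber {G α : Type*} [DecidableEq α] (F : Finset G) (π : G → α)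
    (T : Finset α) (z : G → Bool) (hz : ∀ g, z g = true ↔ π g ∈ T) :
    dens F z = ∑ y ∈ T, dens F (fun g => decide (π g = y)) := by
  rw [dens, card_eq_sum_card_fiberwise (f := π) fun g hg => (hz g).1 (mem_filter.1 hg).2,
    Nat.cast_sum, sum_div]
  refine sum_congr rfl fun y hy => ?_
  rw [dens, filter_filter]
  congr 3
  ext g
  simp only [mem_filter, decide_eq_true_eq]
  constructor
  · exact fun h => ⟨h.1, h.2.2⟩
  · rintro ⟨hg, rfl⟩
    exact ⟨hg, (hz g).2 hy, rfl⟩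

section Folner

variable {G : Type*} [Group G] [DecidableEq G] {F : ℕ → Finset G}

lemma dens_comp_mul_right (F : Finset G) (z : G → Bool) (c : G) :
    dens F (fun g => z (g * c)) = #((F.image (· * c)).filter (z · = true)) / #F := by
  rw [dens, filter_image, card_image_of_injective _ (mul_left_injective c)]

theorem IsFolner.tendsto_dens_comp_mul_right_sub (hF : IsFolner F) (z : G → Bool) (c : G) :
    Tendsto (fun n => dens (F n) (fun g => z (g * c)) - dens (F n) z) atTop (𝓝 0) := by
  refine squeeze_zero_norm (fun n => ?_) (hF.2 c)
  rw [Real.norm_eq_abs, dens_comp_mul_right, dens, div_sub_div_same, abs_div, Nat.abs_cast]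
  gcongr
  exact abs_card_filter_sub_card_filter_le _ _ _

variable {α : Type*} [MulAction G α] [DecidableEq α] {x : α}

theorem IsFolner.tendsto_dens_orbit_fiber (hF : IsFolner F) (hx : (orbit G x).Finite) {y : α}
    (hy : y ∈ orbit G x) :
    Tendsto (fun n => dens (F n) (fun g => decide (g⁻¹ • x = y))) atTop
      (𝓝 (1 / #hx.toFinset)) := by
  refine tendsto_one_div_card_of_sum_eq_one
    (a := fun y n => dens (F n) fun g => decide (g⁻¹ • x = y)) (fun n => ?_)
    (hx.mem_toFinset.2 hy) fun y' hy' => ?_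
  · rw [← dens_eq_sum_dens_fiber (F n) _ _ (fun _ => true) fun g => by simp [mem_orbit]]
    simp [dens, (card_pos.2 (hF.1 n)).ne']
  · rw [Set.Finite.mem_toFinset] at hy'
    obtain ⟨c, rfl⟩ := mem_orbit_iff.1 (orbit_eq_iff.2 hy ▸ hy')
    have hfiber :
        (fun g : G => decide (g⁻¹ • x = c • y)) =
          fun g => decide ((g * c)⁻¹ • x = y) := by
      funext g
      simp only [mul_inv_rev, mul_smul, inv_smul_eq_iff]
    rw [hfiber]
    exact hF.tendsto_dens_comp_mul_right_sub (fun g => decide (g⁻¹ • x = y)) c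

theorem IsFolner.tendsto_dens_comp_inv_smul (hF : IsFolner F) (hx : (orbit G x).Finite)
    (P : α → Bool) :
    Tendsto (fun n => dens (F n) (fun g => P (g⁻¹ • x))) atTop
      (𝓝 (#(hx.toFinset.filter (P · = true)) / #hx.toFinset)) := by
  have hsplit := fun n : ℕ => dens_eq_sum_dens_fiber (F n) (fun g => g⁻¹ • x)
    (hx.toFinset.filter fun y => P y = true) (fun g => P (g⁻¹ • x))
    fun g => by simp [mem_orbit]
  rw [funext hsplit]
  have := tendsto_finsetSum (hx.toFinset.filter fun y => P y = true) fun y hy =>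
    hF.tendsto_dens_orbit_fiber hx (hx.mem_toFinset.1 (mem_filter.1 hy).1)
  simpa [div_eq_mul_inv] using this

end Folner

theorem stmt_16_general {G : Type*} [Group G] [DecidableEq G]
    (hamen : ∃ F : ℕ → Finset G, IsFolner F)
    (α : ℝ) (hirr : Irrational α)
    (X : Set (G → Bool))
    (hdens : ∀ x ∈ X, ∀ F : ℕ → Finset G, IsFolner F →
      Tendsto (fun n => dens (F n) x) atTop (nhds α)) :
    ∀ x ∈ X, Set.Infinite {y : G → Bool | ∃ g : G, y = shift g x} := by
  classical
  let : MulAction G (G → Bool) := arrowAction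
  intro x hx hfin
  obtain ⟨F, hF⟩ := hamen
  have horbit : {y | ∃ g, y = shift g x} = orbit G x := by
    ext y
    simp only [Set.mem_ofPred_eq, mem_orbit_iff, eq_comm]
    rfl
  have hfin' : (orbit G x).Finite := horbit ▸ hfin
  have hlim := hF.tendsto_dens_comp_inv_smul hfin' (fun y => y 1)
  have hx_eq : (fun g : G => (g⁻¹ • x) 1) = x := by
    funext g
    change x (g⁻¹⁻¹ • 1) = x g
    simp
  rw [hx_eq] at hlim
  exact hirr.ne_rat (_ / _) (by push_cast; exact tendsto_nhds_unique (hdens x hx F hF) hlim)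

theorem stmt_16 {G : Type*} [Group G] [Countable G] [Infinite G] [DecidableEq G]
    (hamen : ∃ F : ℕ → Finset G, IsFolner F)
    (α : ℝ) (hα0 : 0 ≤ α) (hα1 : α ≤ 1) (hirr : Irrational α)
    (X : Set (G → Bool))
    (hinv : ∀ x ∈ X, ∀ g : G, shift g x ∈ X)
    (hdens : ∀ x ∈ X, ∀ F : ℕ → Finset G, IsFolner F →
      Tendsto (fun n => dens (F n) x) atTop (nhds α)) :
    ∀ x ∈ X, Set.Infinite {y : G → Bool | ∃ g : G, y = shift g x} :=
  stmt_16_general hamen α hirr X hdens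
end

section
/- Let (X, μ) be a probability space and A₁, …, A_N measurable events. Suppose there is a 'dependency' relation and a function x : {1,…,N} → (0,1) such that for each i, μ(A_i) ≤ x(i)·∏_{j ∈ Γ(i)} (1 − x(j)), where A_i is independent of the σ-algebra generated by all A_j with j ∉ Γ(i) ∪ {i}. Then μ(X \ ⋃_i A_i) ≥ ∏_i (1 − x(i)) > 0. -/
open MeasureTheory ProbabilityTheory

theorem stmt_19 {Ω : Type*} [m0 : MeasurableSpace Ω] (μ : Measure Ω)
    [IsProbabilityMeasure μ] (N : ℕ) (A : Fin N → Set Ω)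
    (hmeas : ∀ i, MeasurableSet (A i))
    (Γ : Fin N → Finset (Fin N))
    (x : Fin N → ℝ) (hx0 : ∀ i, 0 < x i) (hx1 : ∀ i, x i < 1)
    (hindep : ∀ i : Fin N,
      Indep (MeasurableSpace.generateFrom {A i})
        (MeasurableSpace.generateFrom {s | ∃ j : Fin N, j ∉ Γ i ∧ j ≠ i ∧ s = A j}) μ)
    (hLLL : ∀ i, (μ (A i)).toReal ≤ x i * ∏ j ∈ Γ i, (1 - x j)) :
    (μ (⋃ i, A i)ᶜ).toReal ≥ ∏ i, (1 - x i) ∧ 0 < ∏ i, (1 - x i) := by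
  classical
  set C : Finset (Fin N) → Set Ω := fun S => ⋂ j ∈ S, (A j)ᶜ with hCdef
  have hxnn : ∀ j, (0:ℝ) ≤ 1 - x j := fun j => by linarith [hx1 j]
  have hxle1 : ∀ j, (1:ℝ) - x j ≤ 1 := fun j => by linarith [hx0 j]
  -- decomposition identity
  have hdec : ∀ (j : Fin N) (T : Finset (Fin N)),
      (μ (C (insert j T))).toReal = (μ (C T)).toReal - (μ (A j ∩ C T)).toReal := by
    intro j T
    have h1 : C (insert j T) = C T \ A j := by
      simp only [hCdef, Finset.set_biInter_insert]
      rw [Set.diff_eq, Set.inter_comm]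
    have h2 : μ (C T ∩ A j) + μ (C T \ A j) = μ (C T) :=
      measure_inter_add_diff (C T) (hmeas j)
    have h3 : (μ (C T ∩ A j)).toReal + (μ (C T \ A j)).toReal = (μ (C T)).toReal := by
      rw [← ENNReal.toReal_add (measure_ne_top μ _) (measure_ne_top μ _), h2]
    rw [h1, Set.inter_comm (A j)]
    linarith
  -- independence identity
  have hindep' : ∀ (i : Fin N) (S₂ : Finset (Fin N)),
      (∀ j ∈ S₂, j ∉ Γ i ∧ j ≠ i) →
      (μ (A i ∩ C S₂)).toReal = (μ (A i)).toReal * (μ (C S₂)).toReal := by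
    intro i S₂ hS₂
    have hA : MeasurableSet[MeasurableSpace.generateFrom {A i}] (A i) :=
      MeasurableSpace.measurableSet_generateFrom rfl
    have hB : MeasurableSet[MeasurableSpace.generateFrom
        {s | ∃ j : Fin N, j ∉ Γ i ∧ j ≠ i ∧ s = A j}] (C S₂) := by
      refine MeasurableSet.biInter (Set.to_countable _) fun j hj => ?_
      have hmem : A j ∈ {s | ∃ k : Fin N, k ∉ Γ i ∧ k ≠ i ∧ s = A k} :=
        ⟨j, (hS₂ j hj).1, (hS₂ j hj).2, rfl⟩
      exact (MeasurableSpace.measurableSet_generateFrom hmem).compl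
    have := ((ProbabilityTheory.Indep_iff _ _ μ).mp (hindep i)) (A i) (C S₂) hA hB
    rw [this, ENNReal.toReal_mul]
  -- main inductive claim
  have key : ∀ (n : ℕ) (S : Finset (Fin N)) (i : Fin N), S.card ≤ n → i ∉ S →
      (μ (A i ∩ C S)).toReal ≤ x i * (μ (C S)).toReal := by
    intro n
    induction n with
    | zero =>
      intro S i hcard _
      have hS : S = ∅ := Finset.card_eq_zero.mp (Nat.le_zero.mp hcard)
      subst hS
      have hCe : C ∅ = Set.univ := by simp [hCdef]
      rw [hCe, Set.inter_univ, measure_univ]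
      have h1 : ∏ j ∈ Γ i, (1 - x j) ≤ 1 :=
        Finset.prod_le_one (fun j _ => hxnn j) (fun j _ => hxle1 j)
      have := hLLL i
      simp only [ENNReal.toReal_one]
      nlinarith [hx0 i]
    | succ n ih =>
      intro S i hcard hi
      set S₁ : Finset (Fin N) := S ∩ Γ i with hS₁def
      set S₂ : Finset (Fin N) := S \ Γ i with hS₂def
      have hS : S₁ ∪ S₂ = S := sup_inf_sdiff S (Γ i)
      have hS₂prop : ∀ j ∈ S₂, j ∉ Γ i ∧ j ≠ i := by
        intro j hj
        rw [hS₂def, Finset.mem_sdiff] at hj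
        exact ⟨hj.2, fun h => hi (h ▸ hj.1)⟩
      -- peeling lemma
      have peel : ∀ T : Finset (Fin N), T ⊆ S₁ →
          (∏ j ∈ T, (1 - x j)) * (μ (C S₂)).toReal ≤ (μ (C (T ∪ S₂))).toReal := by
        intro T
        induction T using Finset.induction_on with
        | empty => simp
        | @insert j T hj ihT =>
          intro hsub
          have hjS₁ : j ∈ S₁ := hsub (Finset.mem_insert_self j T)
          have hjS : j ∈ S := (Finset.mem_inter.mp hjS₁).1
          have hjΓ : j ∈ Γ i := (Finset.mem_inter.mp hjS₁).2
          have hjTS₂ : j ∉ T ∪ S₂ := by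
            simp only [Finset.mem_union, not_or]
            exact ⟨hj, fun h => ((hS₂prop j h).1 hjΓ)⟩
          have hsub' : T ∪ S₂ ⊆ S.erase j := by
            intro a ha
            rcases Finset.mem_union.mp ha with h | h
            · refine Finset.mem_erase.mpr ⟨fun he => hj (he ▸ h), ?_⟩
              exact (Finset.mem_inter.mp (hsub (Finset.mem_insert_of_mem h))).1
            · exact Finset.mem_erase.mpr ⟨fun he => hjTS₂ (he ▸ ha),
                (Finset.mem_sdiff.mp h).1⟩
          have hcard' : (T ∪ S₂).card ≤ n := by
            have := Finset.card_le_card hsub'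
            rw [Finset.card_erase_of_mem hjS] at this
            omega
          have hkey := ih (T ∪ S₂) j hcard' hjTS₂
          have hdecj := hdec j (T ∪ S₂)
          have hih := ihT (fun a ha => hsub (Finset.mem_insert_of_mem ha))
          have hmn : (0:ℝ) ≤ (μ (C (T ∪ S₂))).toReal := ENNReal.toReal_nonneg
          have hprodnn : (0:ℝ) ≤ ∏ j ∈ T, (1 - x j) :=
            Finset.prod_nonneg fun j _ => hxnn j
          have hmS₂ : (0:ℝ) ≤ (μ (C S₂)).toReal := ENNReal.toReal_nonneg
          rw [Finset.insert_union, hdecj, Finset.prod_insert hj]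
          nlinarith [hxnn j]
      -- monotonicity: C S ⊆ C S₂
      have hmono : (μ (A i ∩ C S)).toReal ≤ (μ (A i ∩ C S₂)).toReal := by
        apply ENNReal.toReal_mono (measure_ne_top μ _)
        apply measure_mono
        apply Set.inter_subset_inter_right
        apply Set.biInter_subset_biInter_left
        intro a ha
        exact Finset.mem_sdiff.mp ha |>.1
      have hind := hindep' i S₂ hS₂prop
      have hsub1 : S₁ ⊆ Γ i := Finset.inter_subset_right
      have hprodle : ∏ j ∈ Γ i, (1 - x j) ≤ ∏ j ∈ S₁, (1 - x j) := by
        rw [← Finset.prod_sdiff hsub1]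
        have h1 : ∏ j ∈ Γ i \ S₁, (1 - x j) ≤ 1 :=
          Finset.prod_le_one (fun j _ => hxnn j) (fun j _ => hxle1 j)
        have h2 : (0:ℝ) ≤ ∏ j ∈ S₁, (1 - x j) := Finset.prod_nonneg fun j _ => hxnn j
        nlinarith
      have hpeel := peel S₁ le_rfl
      rw [hS] at hpeel
      have hmS₂ : (0:ℝ) ≤ (μ (C S₂)).toReal := ENNReal.toReal_nonneg
      have hAi := hLLL i
      calc (μ (A i ∩ C S)).toReal ≤ (μ (A i ∩ C S₂)).toReal := hmono
        _ = (μ (A i)).toReal * (μ (C S₂)).toReal := hind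
        _ ≤ (x i * ∏ j ∈ Γ i, (1 - x j)) * (μ (C S₂)).toReal := by
            apply mul_le_mul_of_nonneg_right hAi hmS₂
        _ ≤ (x i * ∏ j ∈ S₁, (1 - x j)) * (μ (C S₂)).toReal := by
            apply mul_le_mul_of_nonneg_right _ hmS₂
            exact mul_le_mul_of_nonneg_left hprodle (le_of_lt (hx0 i))
        _ = x i * ((∏ j ∈ S₁, (1 - x j)) * (μ (C S₂)).toReal) := by ring
        _ ≤ x i * (μ (C S)).toReal :=
            mul_le_mul_of_nonneg_left hpeel (le_of_lt (hx0 i))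
  -- product lower bound
  have prodbd : ∀ S : Finset (Fin N), ∏ j ∈ S, (1 - x j) ≤ (μ (C S)).toReal := by
    intro S
    induction S using Finset.induction_on with
    | empty => simp [hCdef]
    | @insert j T hj ihT =>
      rw [Finset.prod_insert hj, hdec j T]
      have hk := key T.card T j le_rfl hj
      have h2 : ∏ a ∈ T, (1 - x a) ≤ (μ (C T)).toReal := ihT
      nlinarith [hxnn j, Finset.prod_nonneg (fun a (_ : a ∈ T) => hxnn a),
        ENNReal.toReal_nonneg (a := μ (C T))]
  have hpos : 0 < ∏ i, (1 - x i) := Finset.prod_pos fun i _ => by linarith [hx1 i]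
  refine ⟨?_, hpos⟩
  have hEq : (⋃ i, A i)ᶜ = C Finset.univ := by
    simp [hCdef, Set.compl_iUnion]
  rw [hEq]
  exact prodbd Finset.univ
end
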